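/- arXiv:1409.6275 — 2 statements merged into one kernel-verified Lean document; each statement's English description precedes it below -/
import Mathlib

section
/- In the ring A = Z[x_1,x_2,x_3,y_{12},y_{13},y_{23}]/(x_1^3,…,y_{23}^3), the coefficient of x_1^2 x_2^2 x_3^2 y_{12}^2 y_{13}^2 y_{23}^2 in ∏_{1≤i<j≤3}(x_i+y_{ij})(x_j+y_{ij}) · (x_1+x_2+x_3)^6 equals 6·15 = 90. -/
/-!
The variable `y_{ij}` occurs only in the two factors `(xᵢ + y_{ij})(x_j + y_{ij})` of `[M]`, and
not at all in `(x₁ + x₂ + x₃)⁶`, so the exponent `2` of `y_{ij}` forces the choice of `y_{ij}` in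
both factors. Peeling off the three pairs leaves the coefficient of `x₁²x₂²x₃²` in
`(x₁ + x₂ + x₃)⁶`, the multinomial coefficient `6!/(2!2!2!) = 90`.
-/

open MvPolynomial

/-- Variables: `x₁,x₂,x₃ = X 0, X 1, X 2`; `y₁₂,y₁₃,y₂₃ = X 3, X 4, X 5`.
The class `[M] = ∏_{1≤i<j≤3} (xᵢ+y_{ij})(x_j+y_{ij})`. -/
noncomputable def threeLinesClass : MvPolynomial (Fin 6) ℤ :=
  (X 0 + X 3) * (X 1 + X 3) * (X 0 + X 4) * (X 2 + X 4) * (X 1 + X 5) * (X 2 + X 5)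

namespace MvPolynomial

variable {R σ : Type*} [CommSemiring R]

theorem coeff_eq_zero_of_mem_supported {s : Set σ} {p : MvPolynomial σ R}
    (hp : p ∈ supported R s) {m : σ →₀ ℕ} {i : σ} (hi : i ∉ s) (hm : m i ≠ 0) :
    coeff m p = 0 := by
  by_contra h
  exact hm (mem_support_notMem_vars_zero (mem_support_iff.2 h) fun hv ↦ hi (mem_supported.1 hp hv))

theorem coeff_X_add_mul_X_add_mul [DecidableEq σ] {a b k : σ} (ha : a ≠ k) (hb : b ≠ k)
    {r : MvPolynomial σ R} (hr : r ∈ supported R {k}ᶜ) {m : σ →₀ ℕ} (hm : m k = 2) :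
    coeff m ((X a + X k) * (X b + X k) * r) = coeff (m.erase k) r := by
  have hX {i : σ} (hi : i ≠ k) : X i ∈ supported R {k}ᶜ := Algebra.subset_adjoin ⟨i, hi, rfl⟩
  have hsplit : (X a + X k) * (X b + X k) * r =
      monomial (Finsupp.single k 2) 1 * r + X k * ((X a + X b) * r) + X a * X b * r := by
    rw [← X_pow_eq_monomial]; ring
  have hsq : coeff m (monomial (Finsupp.single k 2) 1 * r) = coeff (m.erase k) r := by
    rw [coeff_monomial_mul', if_pos (Finsupp.single_le_iff.2 hm.ge), one_mul]
    congr 1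
    ext i
    rcases eq_or_ne i k with rfl | hi <;> simp [*]
  have hlin : coeff m (X k * ((X a + X b) * r)) = 0 := by
    rw [coeff_X_mul']
    split_ifs
    · exact coeff_eq_zero_of_mem_supported (mul_mem (add_mem (hX ha) (hX hb)) hr)
        (Set.notMem_compl_iff.2 rfl) (by simp [hm])
    · rfl
  have hconst : coeff m (X a * X b * r) = 0 :=
    coeff_eq_zero_of_mem_supported (mul_mem (mul_mem (hX ha) (hX hb)) hr)
      (Set.notMem_compl_iff.2 rfl) (by simp [hm])
  rw [hsplit, coeff_add, coeff_add, hsq, hlin, hconst, add_zero, add_zero]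

theorem coeff_sum_X_fin_three_pow_six :
    coeff (Finsupp.equivFunOnFinite.symm fun _ : Fin 3 ↦ 2)
      ((∑ i, X i : MvPolynomial (Fin 3) R) ^ 6) = 90 := by
  rw [coeff_sum_X_pow_of_fintype, Finsupp.sum_fintype _ _ fun _ ↦ rfl, if_pos (by decide),
    Finsupp.multinomial_eq_of_support_subset (Finset.subset_univ _),
    Finsupp.coe_equivFunOnFinite_symm,
    show Nat.multinomial Finset.univ (fun _ : Fin 3 ↦ 2) = 90 by decide, Nat.cast_ofNat]

end MvPolynomial

/-- The coefficient of `x₁²x₂²x₃²y₁₂²y₁₃²y₂₃²` in `[M]·(x₁+x₂+x₃)⁶` equals `6·15 = 90`. -/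
theorem degree_threeLines_six_points :
    MvPolynomial.coeff (Finsupp.equivFunOnFinite.symm fun _ : Fin 6 => (2 : ℕ))
      (threeLinesClass * (X 0 + X 1 + X 2) ^ 6) = 90 := by
  have hfactor : threeLinesClass * (X 0 + X 1 + X 2) ^ 6 = (X 0 + X 3) * (X 1 + X 3) *
      ((X 0 + X 4) * (X 2 + X 4) * ((X 1 + X 5) * (X 2 + X 5) * (X 0 + X 1 + X 2) ^ 6)) := by
    simp only [threeLinesClass, mul_assoc]
  have hrename : (X 0 + X 1 + X 2 : MvPolynomial (Fin 6) ℤ) ^ 6 =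
      rename (Fin.castLEEmb (by norm_num : 3 ≤ 6)) ((∑ i, X i) ^ 6) := by
    simp [Fin.sum_univ_three]
  have hexp : (((Finsupp.equivFunOnFinite.symm fun _ : Fin 6 ↦ 2).erase 3).erase 4).erase 5 =
      (Finsupp.equivFunOnFinite.symm fun _ : Fin 3 ↦ 2).embDomain (Fin.castLEEmb (by norm_num)) := by
    ext i
    fin_cases i <;> simp [Finsupp.embDomain_apply] <;> decide
  rw [hfactor, coeff_X_add_mul_X_add_mul (by decide) (by decide) ?_ rfl,
    coeff_X_add_mul_X_add_mul (by decide) (by decide) ?_ (by simp),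
    coeff_X_add_mul_X_add_mul (by decide) (by decide) ?_ (by simp), hexp, hrename,
    coeff_rename_embDomain, coeff_sum_X_fin_three_pow_six]
  -- `pow_mem` is tried first: unifying a power with `?a * ?b` unfolds `npow` and is very slow.
  all_goals repeat' first | refine pow_mem ?_ _ | refine mul_mem ?_ ?_ | refine add_mem ?_ ?_ |
    exact X_mem_supported.2 (by decide)
end

section
/- Identity of formal power series / polynomial expansion: in A(G(d,n)) ⊗ Z[h_1,…,h_k]/(h_1^{n+1},…,h_k^{n+1}), the product ∏_{i=1}^k ( ∑_{ℓ=0}^{d+1} σ_{(1)^{d+1-ℓ}} h_i^{ℓ} ) · (h_1+⋯+h_k)^D expands as ∑_{(s_0,…,s_{d+1})} σ^s · C(k; s_0,…,s_{d+1}) · C(D; (n-d-1)^{s_0}, (n-d)^{s_1}, …, (n)^{s_{d+1}}) · (point-class monomials), where the sum is over tuples with ∑ s_i = k, ∑ i·s_i = (d+1)(n−d), D = (d+1)(n−d)+k(n−d−1), and σ^s = ∏_{i=0}^{d+1} (σ_{(1)^i})^{s_i}. -/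
/-!
Expanding the product, each choice `g : Fin k → Fin (d + 2)` of one term per factor gives the
monomial `(∏ᵢ σ_{g i}) ∏ᵢ hᵢ^(d+1-g i)`. Its product with `(∑ hᵢ)^D` has coefficient
`D! / ∏ᵢ (n-d-1+g i)!` at `h₁ⁿ⋯h_kⁿ` when `∑ᵢ g i = (d+1)(n-d)`, and `0` otherwise. These data
depend on `g` only through its fiber sizes `s_j = #g⁻¹(j)`, and exactly `C(k; s)` maps `g` have
fiber sizes `s`.
-/

open Finset MvPolynomial
open scoped Nat

namespace MvPolynomial

variable {σ R : Type*} [Fintype σ] [CommSemiring R]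

theorem prod_X_pow_eq_monomial_equivFunOnFinite (m : σ → ℕ) :
    ∏ i, (X i : MvPolynomial σ R) ^ m i = monomial (Finsupp.equivFunOnFinite.symm m) 1 := by
  rw [monomial_eq, C_1, one_mul, Finsupp.prod_fintype _ _ fun _ => pow_zero _]
  rfl

theorem coeff_equivFunOnFinite_sum_X_pow (m : σ → ℕ) (D : ℕ) :
    coeff (Finsupp.equivFunOnFinite.symm m) ((∑ i, X i : MvPolynomial σ R) ^ D) =
      if ∑ i, m i = D then (Nat.multinomial univ m : R) else 0 := by
  rw [coeff_sum_X_pow_of_fintype, Finsupp.sum_fintype _ _ fun _ => rfl,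
    Finsupp.multinomial_eq_of_support_subset (subset_univ _), Nat.cast_ite, Nat.cast_zero]
  rfl

end MvPolynomial

theorem Finset.piAntidiag_univ_eq_filter_piFinset_range {κ : Type*} [Fintype κ] [DecidableEq κ]
    (k : ℕ) :
    piAntidiag univ k = {s ∈ Fintype.piFinset fun _ : κ => range (k + 1) | ∑ j, s j = k} := by
  ext s
  simp only [mem_piAntidiag, mem_filter, Fintype.mem_piFinset, mem_range, mem_univ, implies_true,
    and_true]
  refine ⟨fun hs => ⟨fun j => Nat.lt_succ_of_le ?_, hs⟩, And.right⟩
  exact hs ▸ single_le_sum (fun _ _ => Nat.zero_le _) (mem_univ j)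

section FiberCard

variable {ι κ : Type*} [Fintype ι] [DecidableEq κ]

def fiberCard (g : ι → κ) (j : κ) : ℕ := #{i | g i = j}

variable [Fintype κ]

@[to_additive]
theorem prod_comp_eq_prod_pow_fiberCard {M : Type*} [CommMonoid M] (f : κ → M) (g : ι → κ) :
    ∏ i, f (g i) = ∏ j, f j ^ fiberCard g j := by
  simp_rw [fiberCard, ← prod_const]
  exact (prod_fiberwise' univ g f).symm

theorem sum_fiberCard_eq_card (g : ι → κ) : ∑ j, fiberCard g j = Fintype.card ι := by
  rw [← card_univ, card_eq_sum_card_fiberwise fun i _ => mem_univ (g i)]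
  rfl

theorem Nat.multinomial_comp_eq_div (w : κ → ℕ) (g : ι → κ) :
    Nat.multinomial univ (fun i => w (g i)) = (∑ i, w (g i))! / ∏ j, (w j)! ^ fiberCard g j := by
  rw [Nat.multinomial, ← prod_comp_eq_prod_pow_fiberCard fun j => (w j)!]

variable [DecidableEq ι]

-- Compare the coefficients of `∏ Xⱼ ^ sⱼ` in `(∑ⱼ Xⱼ) ^ #ι = ∑_g ∏ᵢ X_{g i}`.
theorem card_filter_fiberCard_eq_multinomial (s : κ → ℕ) (hs : ∑ j, s j = Fintype.card ι) :
    #{g : ι → κ | fiberCard g = s} = Nat.multinomial univ s := by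
  have hcoeff := coeff_equivFunOnFinite_sum_X_pow (R := ℕ) s (Fintype.card ι)
  rw [if_pos hs, ← card_univ, ← prod_const, prod_univ_sum, Fintype.piFinset_univ,
    coeff_sum] at hcoeff
  simp_rw [prod_comp_eq_prod_pow_fiberCard X, prod_X_pow_eq_monomial_equivFunOnFinite,
    coeff_monomial, Finsupp.equivFunOnFinite.symm.injective.eq_iff, sum_boole] at hcoeff
  exact_mod_cast hcoeff

theorem sum_comp_fiberCard_eq_sum_piAntidiag {M : Type*} [AddCommMonoid M] (F : (κ → ℕ) → M) :
    ∑ g : ι → κ, F (fiberCard g) =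
      ∑ s ∈ piAntidiag univ (Fintype.card ι), Nat.multinomial univ s • F s := by
  have hmaps : ∀ g ∈ (univ : Finset (ι → κ)), fiberCard g ∈ piAntidiag univ (Fintype.card ι) :=
    fun g _ => mem_piAntidiag.2 ⟨sum_fiberCard_eq_card g, fun j _ => mem_univ j⟩
  rw [← sum_fiberwise_of_maps_to hmaps]
  refine sum_congr rfl fun s hs => ?_
  rw [sum_congr rfl fun g hg => congrArg F (mem_filter.1 hg).2, sum_const,
    card_filter_fiberCard_eq_multinomial s (mem_piAntidiag.1 hs).1]

theorem sum_ite_multinomial_comp_smul_prod {R : Type*} [CommSemiring R] (w : κ → ℕ) (c : κ → R)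
    (D : ℕ) :
    ∑ g : ι → κ,
        (if ∑ i, w (g i) = D then Nat.multinomial univ (fun i => w (g i)) • ∏ i, c (g i) else 0) =
      ∑ s ∈ piAntidiag univ (Fintype.card ι), if ∑ j, s j * w j = D then
        (Nat.multinomial univ s * (D ! / ∏ j, (w j)! ^ s j)) • ∏ j, c j ^ s j else 0 := by
  let F : (κ → ℕ) → R := fun s =>
    if ∑ j, s j * w j = D then (D ! / ∏ j, (w j)! ^ s j) • ∏ j, c j ^ s j else 0
  have hsummand (g : ι → κ) :
      (if ∑ i, w (g i) = D then Nat.multinomial univ (fun i => w (g i)) • ∏ i, c (g i) else 0) =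
        F (fiberCard g) := by
    rw [sum_comp_eq_sum_nsmul_fiberCard w, Nat.multinomial_comp_eq_div,
      prod_comp_eq_prod_pow_fiberCard c, sum_comp_eq_sum_nsmul_fiberCard w]
    simp only [F, smul_eq_mul]
    split_ifs with h
    · rw [h]
    · rfl
  rw [sum_congr rfl fun g _ => hsummand g, sum_comp_fiberCard_eq_sum_piAntidiag]
  refine sum_congr rfl fun s _ => ?_
  simp only [F, smul_ite, smul_zero, mul_smul]

end FiberCard

namespace MvPolynomial

variable {ι κ R : Type*} [Fintype ι] [DecidableEq ι] [Fintype κ] [CommSemiring R]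

theorem coeff_prod_sum_C_mul_X_pow_mul_sum_X_pow (c : κ → R) (e : κ → ℕ) {n : ℕ}
    (he : ∀ j, e j ≤ n) (D : ℕ) :
    coeff (Finsupp.equivFunOnFinite.symm fun _ => n)
        ((∏ i : ι, ∑ j, C (c j) * X i ^ e j) * (∑ i, X i) ^ D) =
      ∑ g : ι → κ, if ∑ i, (n - e (g i)) = D then
        Nat.multinomial univ (fun i => n - e (g i)) • ∏ i, c (g i) else 0 := by
  rw [prod_univ_sum, Fintype.piFinset_univ, sum_mul, coeff_sum]
  refine sum_congr rfl fun g _ => ?_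
  have hmonomial : ∏ i, C (c (g i)) * (X i : MvPolynomial ι R) ^ e (g i) =
      monomial (Finsupp.equivFunOnFinite.symm (e ∘ g)) (∏ i, c (g i)) := by
    rw [prod_mul_distrib, ← map_prod, prod_X_pow_eq_monomial_equivFunOnFinite, C_mul_monomial,
      mul_one]
    rfl
  have hle : Finsupp.equivFunOnFinite.symm (e ∘ g) ≤ Finsupp.equivFunOnFinite.symm fun _ => n :=
    fun i => he (g i)
  have hsub : (Finsupp.equivFunOnFinite.symm fun _ => n) - Finsupp.equivFunOnFinite.symm (e ∘ g) =
      Finsupp.equivFunOnFinite.symm fun i => n - e (g i) := by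
    ext i
    rfl
  rw [hmonomial, coeff_monomial_mul', if_pos hle, hsub, coeff_equivFunOnFinite_sum_X_pow, mul_ite,
    mul_zero, mul_comm, nsmul_eq_mul]

end MvPolynomial

/-- `σ m` stands for the Schubert class `σ_{(1)^m}` in the Chow ring `A` of `G(d,n)` and the
hyperplane classes `hᵢ` are the variables `X i`; the relations `hᵢ^{n+1} = 0` need not be imposed,
since they do not affect the coefficient of `h₁ⁿ⋯h_kⁿ`. -/
theorem d_coned_expansion (d n k : ℕ) (hdn : d < n)
    (A : Type*) [CommRing A] (σ : ℕ → A) :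
    MvPolynomial.coeff (Finsupp.equivFunOnFinite.symm fun _ : Fin k => n)
        ((∏ i : Fin k, ∑ ℓ ∈ Finset.range (d + 2),
            MvPolynomial.C (σ (d + 1 - ℓ)) * (X i : MvPolynomial (Fin k) A) ^ ℓ) *
          (∑ i : Fin k, (X i : MvPolynomial (Fin k) A)) ^
            ((d + 1) * (n - d) + k * (n - d - 1))) =
      ∑ s ∈ Fintype.piFinset (fun _ : Fin (d + 2) => Finset.range (k + 1)),
        if (∑ i, s i) = k ∧ (∑ i : Fin (d + 2), (i : ℕ) * s i) = (d + 1) * (n - d) then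
          (Nat.multinomial Finset.univ s *
              (Nat.factorial ((d + 1) * (n - d) + k * (n - d - 1)) /
                ∏ i : Fin (d + 2), Nat.factorial (n - d - 1 + (i : ℕ)) ^ s i)) •
            ∏ i : Fin (d + 2), σ (i : ℕ) ^ s i
        else 0 := by
  set D := (d + 1) * (n - d) + k * (n - d - 1)
  have hreflect (i : Fin k) :
      ∑ ℓ ∈ range (d + 2), C (σ (d + 1 - ℓ)) * (X i : MvPolynomial (Fin k) A) ^ ℓ =
        ∑ j : Fin (d + 2), C (σ j) * X i ^ (d + 1 - j) := by
    rw [Fin.sum_univ_eq_sum_range (fun j => C (σ j) * X i ^ (d + 1 - j)), ← sum_range_reflect]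
    refine sum_congr rfl fun ℓ hℓ => ?_
    rw [mem_range] at hℓ
    rw [show d + 2 - 1 - ℓ = d + 1 - ℓ by omega, Nat.sub_sub_self (by omega)]
  have hexponent (j : Fin (d + 2)) : n - (d + 1 - j) = n - d - 1 + j := by omega
  have hdegree (s : Fin (d + 2) → ℕ) (hs : ∑ j, s j = k) :
      ∑ j, s j * (n - d - 1 + j) = D ↔ ∑ j : Fin (d + 2), (j : ℕ) * s j = (d + 1) * (n - d) := by
    have hsplit :
        ∑ j, s j * (n - d - 1 + j) = k * (n - d - 1) + ∑ j : Fin (d + 2), (j : ℕ) * s j := by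
      simp_rw [mul_add, sum_add_distrib, ← sum_mul, hs, mul_comm]
    omega
  rw [prod_congr rfl fun i _ => hreflect i,
    coeff_prod_sum_C_mul_X_pow_mul_sum_X_pow (fun j : Fin (d + 2) => σ j) (fun j => d + 1 - j)
      (fun j => by omega),
    sum_ite_multinomial_comp_smul_prod (fun j : Fin (d + 2) => n - (d + 1 - j)) (fun j => σ j),
    Fintype.card_fin, piAntidiag_univ_eq_filter_piFinset_range, sum_filter]
  refine sum_congr rfl fun s _ => ?_
  simp_rw [hexponent]
  by_cases hs : ∑ j, s j = k
  · simp only [hs, hdegree s hs, true_and, ↓reduceIte]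
  · simp only [hs, false_and, if_false]
end
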